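/- arXiv:nlin/0306047 — 4 statements merged into one kernel-verified Lean document; each statement's English description precedes it below -/
import Mathlib

section
/- Complete monotonicity and weak continuity of the explicit solution for the constant kernel: Let ν₀ be a finite positive Radon measure on (0,∞) and set φ₀(s) = ∫ (1−e^{−sx}) ν₀(dx). Then for each t ≥ 0 the function s ↦ ∂_s[φ₀(s)/(1+tφ₀(s))] is completely monotone on (0,∞), so there is a family of positive Radon measures ν_t on (0,∞) with ∫ (1−e^{−sx}) ν_t(dx) = φ₀(s)/(1+tφ₀(s)); the map t ↦ ν_t is weakly continuous (⟨f,ν_τ⟩ → ⟨f,ν_t⟩ as τ → t, for every continuous f with compact support in (0,∞)), and the total number of clusters satisfies ν_t((0,∞)) = ν₀((0,∞))/(1 + ν₀((0,∞)) t) for all t ≥ 0. -/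
/-!
Write `M = ν₀(0,∞)` and `L(s) = ∫ e^{-sx} ν₀(dx)`, so that `φ₀ = M - L` and
`φ₀ / (1 + tφ₀) = M / (1 + tM) - L / ((1 + tM)(1 + tM - tL))`. Since `0 ≤ L ≤ M`, the last
term is the geometric series `∑ tⁿ Lⁿ⁺¹ / (1 + tM)ⁿ⁺²`, and `Lⁿ⁺¹` is the Laplace transform of
the convolution power `ν₀^{*(n+1)}`. Hence `ν_t = ∑ tⁿ / (1 + tM)ⁿ⁺² ν₀^{*(n+1)}` is a measure
on `(0,∞)` of mass `M / (1 + tM)` with `∫ (1 - e^{-sx}) ν_t(dx) = φ₀ / (1 + tφ₀)`.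
Differentiating under the integral, `∂_s` of this transform is `∫ x e^{-sx} ν_t(dx)`, whose
`n`-th derivative is `(-1)ⁿ ∫ xⁿ⁺¹ e^{-sx} ν_t(dx)`. Weak continuity follows from uniform
convergence of the series on bounded time intervals.
-/

open MeasureTheory Filter Topology Set Real

noncomputable section

/-- Complete monotonicity of g on (0,∞):
g is infinitely differentiable with (−1)ⁿ g⁽ⁿ⁾ ≥ 0 on (0,∞). -/
def CompletelyMonotoneOn (g : ℝ → ℝ) : Prop :=
  (∀ n : ℕ, DifferentiableOn ℝ (iteratedDeriv n g) (Set.Ioi 0)) ∧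
  (∀ n : ℕ, ∀ s : ℝ, 0 < s → 0 ≤ (-1 : ℝ) ^ n * iteratedDeriv n g s)

theorem CompletelyMonotoneOn.congr {f g : ℝ → ℝ} (hf : CompletelyMonotoneOn f)
    (hfg : EqOn f g (Ioi 0)) : CompletelyMonotoneOn g := by
  have h n := hfg.iteratedDeriv_of_isOpen isOpen_Ioi n
  refine ⟨fun n => (hf.1 n).congr fun s hs => (h n hs).symm, fun n s hs => ?_⟩
  rw [← h n hs]
  exact hf.2 n s hs

theorem pow_mul_exp_neg_mul_le {x s : ℝ} (hx : 0 ≤ x) (hs : 0 < s) (k : ℕ) :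
    x ^ k * exp (-(s * x)) ≤ k.factorial / s ^ k := by
  have key := pow_div_factorial_le_exp (s * x) (mul_nonneg hs.le hx) k
  rw [exp_neg, ← div_eq_mul_inv, div_le_div_iff₀ (exp_pos _) (by positivity)]
  rw [div_le_iff₀ (by positivity), mul_pow] at key
  linarith

section expNeg

variable {ν : Measure ℝ} {s : ℝ}

theorem ae_norm_exp_neg_mul_le_one (hν : ∀ᵐ x ∂ν, 0 ≤ x) (hs : 0 ≤ s) :
    ∀ᵐ x ∂ν, ‖exp (-(s * x))‖ ≤ 1 := by
  filter_upwards [hν] with x hx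
  rw [norm_of_nonneg (exp_pos _).le, exp_le_one_iff, neg_nonpos]
  exact mul_nonneg hs hx

variable [IsFiniteMeasure ν]

theorem integrable_exp_neg_mul (hν : ∀ᵐ x ∂ν, 0 ≤ x) (hs : 0 ≤ s) :
    Integrable (fun x => exp (-(s * x))) ν :=
  .of_bound (by fun_prop) 1 (ae_norm_exp_neg_mul_le_one hν hs)

theorem integral_exp_neg_mul_le_measureReal_univ (hν : ∀ᵐ x ∂ν, 0 ≤ x) (hs : 0 ≤ s) :
    ∫ x, exp (-(s * x)) ∂ν ≤ ν.real univ := by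
  simpa using integral_mono_ae (integrable_exp_neg_mul hν hs) (integrable_const 1)
    ((ae_norm_exp_neg_mul_le_one hν hs).mono fun x hx => (le_abs_self _).trans hx)

theorem integral_one_sub_exp_neg_mul (hν : ∀ᵐ x ∂ν, 0 ≤ x) (hs : 0 ≤ s) :
    ∫ x, (1 - exp (-(s * x))) ∂ν = ν.real univ - ∫ x, exp (-(s * x)) ∂ν := by
  rw [integral_sub (integrable_const 1) (integrable_exp_neg_mul hν hs)]
  simp

end expNeg

def laplaceMoment (μ : Measure ℝ) (k : ℕ) (s : ℝ) : ℝ :=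
  ∫ x, x ^ k * exp (-(s * x)) ∂μ

section laplaceMoment

variable {μ : Measure ℝ} [IsFiniteMeasure μ]

theorem integrable_pow_mul_exp_neg_mul (hμ : ∀ᵐ x ∂μ, 0 ≤ x) (k : ℕ) {s : ℝ} (hs : 0 < s) :
    Integrable (fun x => x ^ k * exp (-(s * x))) μ := by
  refine .of_bound (by fun_prop) (k.factorial / s ^ k) ?_
  filter_upwards [hμ] with x hx
  rw [norm_of_nonneg (by positivity)]
  exact pow_mul_exp_neg_mul_le hx hs k

theorem hasDerivAt_laplaceMoment (hμ : ∀ᵐ x ∂μ, 0 ≤ x) (k : ℕ) {s : ℝ} (hs : 0 < s) :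
    HasDerivAt (laplaceMoment μ k) (-laplaceMoment μ (k + 1) s) s := by
  have hs2 : 0 < s / 2 := half_pos hs
  have hderiv : ∀ x u : ℝ, HasDerivAt (fun u => x ^ k * exp (-(u * x)))
      (-(x ^ (k + 1) * exp (-(u * x)))) u := fun x u =>
    ((((hasDerivAt_id u).mul_const x).fun_neg.exp).const_mul (x ^ k)).congr_deriv
      (by simp only [id]; ring)
  -- on the ball `|u - s| < s / 2` the derivative is dominated by its value at `u = s / 2`
  have hbound : ∀ᵐ x ∂μ, ∀ u ∈ Metric.ball s (s / 2),
      ‖-(x ^ (k + 1) * exp (-(u * x)))‖ ≤ (k + 1).factorial / (s / 2) ^ (k + 1) := by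
    filter_upwards [hμ] with x hx u hu
    have hu : s / 2 < u := by
      rw [Metric.mem_ball, dist_comm, Real.dist_eq, abs_lt] at hu
      linarith [hu.2]
    rw [norm_neg, norm_of_nonneg (by positivity)]
    refine le_trans ?_ (pow_mul_exp_neg_mul_le hx hs2 (k + 1))
    gcongr
  have := hasDerivAt_integral_of_dominated_loc_of_deriv_le (Metric.ball_mem_nhds s hs2)
    (.of_forall fun u => by fun_prop) (integrable_pow_mul_exp_neg_mul hμ k hs) (by fun_prop)
    hbound (integrable_const _) (.of_forall fun x u _ => hderiv x u)
  rw [integral_neg] at this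
  exact this.2

theorem eqOn_iteratedDeriv_laplaceMoment (hμ : ∀ᵐ x ∂μ, 0 ≤ x) (k n : ℕ) :
    EqOn (iteratedDeriv n (laplaceMoment μ k))
      (fun s => (-1) ^ n * laplaceMoment μ (n + k) s) (Ioi 0) := by
  induction n with
  | zero => intro s _; simp
  | succ n ih =>
    intro s hs
    rw [iteratedDeriv_succ, (ih.eventuallyEq_of_mem (isOpen_Ioi.mem_nhds hs)).deriv_eq,
      ((hasDerivAt_laplaceMoment hμ (n + k) hs).const_mul _).deriv, Nat.add_right_comm]
    ring

theorem completelyMonotoneOn_laplaceMoment (hμ : ∀ᵐ x ∂μ, 0 ≤ x) (k : ℕ) :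
    CompletelyMonotoneOn (laplaceMoment μ k) := by
  have h := eqOn_iteratedDeriv_laplaceMoment hμ k
  refine ⟨fun n s hs => ?_, fun n s hs => ?_⟩
  · refine (DifferentiableAt.congr_of_eventuallyEq ?_
      ((h n).eventuallyEq_of_mem (isOpen_Ioi.mem_nhds hs))).differentiableWithinAt
    exact ((hasDerivAt_laplaceMoment hμ (n + k) hs).differentiableAt.const_mul _)
  · rw [h n hs, ← mul_assoc, ← mul_pow]
    simp only [mul_neg, mul_one, neg_neg, one_pow, one_mul]
    exact integral_nonneg_of_ae (by filter_upwards [hμ] with x hx; positivity)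

theorem eqOn_deriv_integral_one_sub_exp (hμ : ∀ᵐ x ∂μ, 0 ≤ x) :
    EqOn (deriv fun s => ∫ x, (1 - exp (-(s * x))) ∂μ) (laplaceMoment μ 1) (Ioi 0) := by
  intro s hs
  have hfun : (fun s => ∫ x, (1 - exp (-(s * x))) ∂μ) =ᶠ[𝓝 s]
      fun s => μ.real univ - laplaceMoment μ 0 s := by
    filter_upwards [isOpen_Ioi.mem_nhds hs] with u hu
    rw [integral_one_sub_exp_neg_mul hμ hu.le]
    simp [laplaceMoment]
  rw [hfun.deriv_eq, ((hasDerivAt_laplaceMoment hμ 0 hs).const_sub _).deriv, neg_neg]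

theorem completelyMonotoneOn_deriv_integral_one_sub_exp (hμ : ∀ᵐ x ∂μ, 0 ≤ x) :
    CompletelyMonotoneOn (deriv fun s => ∫ x, (1 - exp (-(s * x))) ∂μ) :=
  (completelyMonotoneOn_laplaceMoment hμ 1).congr (eqOn_deriv_integral_one_sub_exp hμ).symm

end laplaceMoment

section convPow

variable {M : Type*} [AddMonoid M] [MeasurableSpace M]

theorem ae_conv_of_add_closed [MeasurableAdd₂ M] {μ ν : Measure M} [SFinite μ] [SFinite ν]
    {p : M → Prop} (hp : MeasurableSet {x | p x}) (hadd : ∀ x y, p x → p y → p (x + y))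
    (hμ : ∀ᵐ x ∂μ, p x) (hν : ∀ᵐ x ∂ν, p x) : ∀ᵐ x ∂(μ ∗ ν), p x := by
  rw [Measure.conv, ae_map_iff (by fun_prop) hp]
  filter_upwards [Measure.quasiMeasurePreserving_fst.ae hμ,
    Measure.quasiMeasurePreserving_snd.ae hν] with q h₁ h₂ using hadd _ _ h₁ h₂

def convPow (μ : Measure M) : ℕ → Measure M
  | 0 => Measure.dirac 0
  | n + 1 => convPow μ n ∗ μ

variable (μ : Measure M) [IsFiniteMeasure μ]

instance isFiniteMeasure_convPow : ∀ n, IsFiniteMeasure (convPow μ n)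
  | 0 => inferInstanceAs (IsFiniteMeasure (Measure.dirac 0))
  | n + 1 =>
    have := isFiniteMeasure_convPow n
    inferInstanceAs (IsFiniteMeasure (convPow μ n ∗ μ))

variable {μ}

theorem ae_convPow_succ_of_add_closed [MeasurableAdd₂ M] {p : M → Prop}
    (hp : MeasurableSet {x | p x}) (hadd : ∀ x y, p x → p y → p (x + y)) (hμ : ∀ᵐ x ∂μ, p x)
    (n : ℕ) : ∀ᵐ x ∂(convPow μ (n + 1)), p x := by
  induction n with
  | zero => simpa [convPow] using hμ
  | succ n ih => exact ae_conv_of_add_closed hp hadd ih hμ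

end convPow

theorem integral_exp_neg_mul_conv {μ ν : Measure ℝ} [SFinite μ] [SFinite ν] (s : ℝ) :
    ∫ x, exp (-(s * x)) ∂(μ ∗ ν) = (∫ x, exp (-(s * x)) ∂μ) * ∫ x, exp (-(s * x)) ∂ν := by
  rw [Measure.conv, integral_map (by fun_prop) (by fun_prop), ← integral_prod_mul]
  congr with p
  rw [← exp_add, mul_add, neg_add]

section

variable (μ : Measure ℝ) [IsFiniteMeasure μ]

theorem integral_exp_neg_mul_convPow (s : ℝ) (n : ℕ) :
    ∫ x, exp (-(s * x)) ∂(convPow μ n) = (∫ x, exp (-(s * x)) ∂μ) ^ n := by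
  induction n with
  | zero => simp [convPow]
  | succ n ih => rw [convPow, integral_exp_neg_mul_conv, ih, pow_succ]

theorem measureReal_univ_convPow (n : ℕ) : (convPow μ n).real univ = μ.real univ ^ n := by
  simpa using integral_exp_neg_mul_convPow μ 0 n

end

section WeightedSum

variable {α : Type*} [MeasurableSpace α] {μ : ℕ → Measure α} [∀ n, IsFiniteMeasure (μ n)]
  {a : ℕ → ℝ}

theorem isFiniteMeasure_sum_ofReal_smul (ha : ∀ n, 0 ≤ a n)
    (hsum : Summable fun n => a n * (μ n).real univ) :
    IsFiniteMeasure (Measure.sum fun n => ENNReal.ofReal (a n) • μ n) := by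
  constructor
  have h n : ENNReal.ofReal (a n) * μ n univ = ENNReal.ofReal (a n * (μ n).real univ) := by
    rw [ENNReal.ofReal_mul (ha n), ofReal_measureReal]
  simp only [Measure.sum_apply _ MeasurableSet.univ, Measure.smul_apply, smul_eq_mul, h,
    ← ENNReal.ofReal_tsum_of_nonneg (fun n => mul_nonneg (ha n) measureReal_nonneg) hsum]
  exact ENNReal.ofReal_lt_top

theorem integral_sum_ofReal_smul (ha : ∀ n, 0 ≤ a n)
    (hsum : Summable fun n => a n * (μ n).real univ) {f : α → ℝ} (hf : StronglyMeasurable f)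
    {C : ℝ} (hfC : ∀ n, ∀ᵐ x ∂(μ n), ‖f x‖ ≤ C) :
    ∫ x, f x ∂(Measure.sum fun n => ENNReal.ofReal (a n) • μ n) = ∑' n, a n * ∫ x, f x ∂(μ n) := by
  have := isFiniteMeasure_sum_ofReal_smul ha hsum
  rw [integral_sum_measure (.of_bound hf.aestronglyMeasurable C
    (Measure.ae_sum_iff.2 fun n => Measure.ae_smul_measure (hfC n) _))]
  simp only [integral_smul_measure, ENNReal.toReal_ofReal (ha _), smul_eq_mul]

theorem measureReal_sum_ofReal_smul_univ (ha : ∀ n, 0 ≤ a n)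
    (hsum : Summable fun n => a n * (μ n).real univ) :
    (Measure.sum fun n => ENNReal.ofReal (a n) • μ n).real univ = ∑' n, a n * (μ n).real univ := by
  simpa using integral_sum_ofReal_smul ha hsum (stronglyMeasurable_const (b := (1 : ℝ)))
    (C := 1) fun n => .of_forall fun _ => by simp

end WeightedSum

theorem hasSum_constKernel_series {t M L : ℝ} (ht : 0 ≤ t) (hL : 0 ≤ L) (hLM : L ≤ M) :
    HasSum (fun n : ℕ => t ^ n / (1 + t * M) ^ (n + 2) * L ^ (n + 1))
      (L / ((1 + t * M) * (1 + t * M - t * L))) := by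
  have hP : 0 < 1 + t * M := by nlinarith
  have hQ : 0 < 1 + t * M - t * L := by nlinarith
  have hr : t * L / (1 + t * M) < 1 := by rw [div_lt_one hP]; nlinarith
  have h := (hasSum_geometric_of_lt_one (by positivity) hr).mul_left (L / (1 + t * M) ^ 2)
  have hP' := hP.ne'
  have hterm : (fun n : ℕ => t ^ n / (1 + t * M) ^ (n + 2) * L ^ (n + 1))
      = fun n => L / (1 + t * M) ^ 2 * (t * L / (1 + t * M)) ^ n := by
    ext n
    rw [div_pow]
    field_simp
    ring
  have hsum : L / ((1 + t * M) * (1 + t * M - t * L))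
      = L / (1 + t * M) ^ 2 * (1 - t * L / (1 + t * M))⁻¹ := by
    rw [one_sub_div hP', inv_div]
    field_simp
  rwa [hterm, hsum]

theorem constKernel_weight_mul_pow_le {τ T M : ℝ} (hτ : 0 ≤ τ) (hτT : τ ≤ T) (hM : 0 ≤ M) (n : ℕ) :
    τ ^ n / (1 + τ * M) ^ (n + 2) * M ^ (n + 1) ≤ M * (T * M / (1 + T * M)) ^ n := by
  have hP : 1 ≤ 1 + τ * M := by nlinarith
  have hρ : τ * M / (1 + τ * M) ≤ T * M / (1 + T * M) := by
    rw [div_le_div_iff₀ (by linarith) (by nlinarith)]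
    nlinarith [mul_le_mul_of_nonneg_right hτT hM]
  calc τ ^ n / (1 + τ * M) ^ (n + 2) * M ^ (n + 1)
      = M * (τ * M / (1 + τ * M)) ^ n / (1 + τ * M) ^ 2 := by
        have : 1 + τ * M ≠ 0 := by positivity
        rw [div_pow]
        field_simp
        ring
    _ ≤ M * (τ * M / (1 + τ * M)) ^ n :=
        div_le_self (by positivity) (one_le_pow₀ hP)
    _ ≤ M * (T * M / (1 + T * M)) ^ n := by gcongr

theorem constKernel_weight_nonneg {t M : ℝ} (ht : 0 ≤ t) (hM : 0 ≤ M) (n : ℕ) :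
    0 ≤ t ^ n / (1 + t * M) ^ (n + 2) := by
  positivity

def constKernelSolution (μ : Measure ℝ) (t : ℝ) : Measure ℝ :=
  Measure.sum fun n => ENNReal.ofReal (t ^ n / (1 + t * μ.real univ) ^ (n + 2)) • convPow μ (n + 1)

section constKernelSolution

variable {μ : Measure ℝ} [IsFiniteMeasure μ] {t : ℝ}

theorem hasSum_constKernel_weight_mul_measureReal (ht : 0 ≤ t) :
    HasSum (fun n => t ^ n / (1 + t * μ.real univ) ^ (n + 2) * (convPow μ (n + 1)).real univ)
      (μ.real univ / (1 + t * μ.real univ)) := by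
  have h := hasSum_constKernel_series ht measureReal_nonneg le_rfl (M := μ.real univ)
  rw [add_sub_cancel_right, mul_one] at h
  simpa only [measureReal_univ_convPow] using h

theorem isFiniteMeasure_constKernelSolution (ht : 0 ≤ t) :
    IsFiniteMeasure (constKernelSolution μ t) :=
  isFiniteMeasure_sum_ofReal_smul (constKernel_weight_nonneg ht measureReal_nonneg)
    (hasSum_constKernel_weight_mul_measureReal ht).summable

theorem measureReal_univ_constKernelSolution (ht : 0 ≤ t) :
    (constKernelSolution μ t).real univ = μ.real univ / (1 + t * μ.real univ) := by
  have h := hasSum_constKernel_weight_mul_measureReal (μ := μ) ht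
  rw [constKernelSolution,
    measureReal_sum_ofReal_smul_univ (constKernel_weight_nonneg ht measureReal_nonneg) h.summable,
    h.tsum_eq]

theorem integral_constKernelSolution (ht : 0 ≤ t) {f : ℝ → ℝ} (hf : StronglyMeasurable f) {C : ℝ}
    (hfC : ∀ n, ∀ᵐ x ∂(convPow μ (n + 1)), ‖f x‖ ≤ C) :
    ∫ x, f x ∂(constKernelSolution μ t)
      = ∑' n, t ^ n / (1 + t * μ.real univ) ^ (n + 2) * ∫ x, f x ∂(convPow μ (n + 1)) :=
  integral_sum_ofReal_smul (constKernel_weight_nonneg ht measureReal_nonneg)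
    (hasSum_constKernel_weight_mul_measureReal ht).summable hf hfC

theorem ae_constKernelSolution_of_add_closed {p : ℝ → Prop} (hp : MeasurableSet {x | p x})
    (hadd : ∀ x y, p x → p y → p (x + y)) (hμ : ∀ᵐ x ∂μ, p x) :
    ∀ᵐ x ∂(constKernelSolution μ t), p x :=
  Measure.ae_sum_iff.2 fun n =>
    Measure.ae_smul_measure (ae_convPow_succ_of_add_closed hp hadd hμ n) _

theorem integral_exp_neg_mul_constKernelSolution (hμ : ∀ᵐ x ∂μ, 0 ≤ x) (ht : 0 ≤ t) {s : ℝ}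
    (hs : 0 ≤ s) :
    ∫ x, exp (-(s * x)) ∂(constKernelSolution μ t)
      = (∫ x, exp (-(s * x)) ∂μ) / ((1 + t * μ.real univ)
          * (1 + t * μ.real univ - t * ∫ x, exp (-(s * x)) ∂μ)) := by
  rw [integral_constKernelSolution ht (by fun_prop) fun n => ae_norm_exp_neg_mul_le_one
    (ae_convPow_succ_of_add_closed measurableSet_Ici (fun _ _ => add_nonneg) hμ n) hs]
  simp only [integral_exp_neg_mul_convPow]
  exact (hasSum_constKernel_series ht (integral_nonneg fun _ => (exp_pos _).le)
    (integral_exp_neg_mul_le_measureReal_univ hμ hs)).tsum_eq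

theorem integral_one_sub_exp_neg_mul_constKernelSolution (hμ : ∀ᵐ x ∂μ, 0 ≤ x) (ht : 0 ≤ t)
    {s : ℝ} (hs : 0 ≤ s) :
    ∫ x, (1 - exp (-(s * x))) ∂(constKernelSolution μ t)
      = (∫ x, (1 - exp (-(s * x))) ∂μ) / (1 + t * ∫ x, (1 - exp (-(s * x))) ∂μ) := by
  have := isFiniteMeasure_constKernelSolution (μ := μ) ht
  have hν := ae_constKernelSolution_of_add_closed (t := t) measurableSet_Ici
    (fun _ _ => add_nonneg) hμ
  rw [integral_one_sub_exp_neg_mul hν hs, integral_one_sub_exp_neg_mul hμ hs,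
    measureReal_univ_constKernelSolution ht, integral_exp_neg_mul_constKernelSolution hμ ht hs]
  have hLM := integral_exp_neg_mul_le_measureReal_univ hμ hs
  have hL : 0 ≤ ∫ x, exp (-(s * x)) ∂μ := integral_nonneg fun _ => (exp_pos _).le
  generalize μ.real univ = M at *
  generalize ∫ x, exp (-(s * x)) ∂μ = L at *
  have hP : 0 < 1 + t * M := by nlinarith
  have hQ : 0 < 1 + t * M - t * L := by nlinarith
  rw [show 1 + t * (M - L) = 1 + t * M - t * L by ring, div_sub_div _ _ hP.ne' (by positivity),
    div_eq_div_iff (by positivity) hQ.ne']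
  ring

theorem continuousOn_integral_constKernelSolution {f : ℝ → ℝ} (hf : StronglyMeasurable f)
    {C : ℝ} (hfC : ∀ x, ‖f x‖ ≤ C) :
    ContinuousOn (fun τ => ∫ x, f x ∂(constKernelSolution μ τ)) (Ici 0) := by
  have hM : 0 ≤ μ.real univ := measureReal_nonneg
  have ha n : ‖∫ x, f x ∂(convPow μ (n + 1))‖ ≤ C * μ.real univ ^ (n + 1) := by
    simpa [measureReal_univ_convPow, mul_comm] using
      norm_integral_le_of_norm_le_const (μ := convPow μ (n + 1)) (.of_forall hfC)
  have hC : 0 ≤ C := (norm_nonneg _).trans (hfC 0)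
  -- on `[0, T)` the series is dominated by a geometric series with ratio `T M / (1 + T M) < 1`
  have hseries (T : ℝ) (hT : 0 ≤ T) : ContinuousOn (fun τ => ∑' n,
      τ ^ n / (1 + τ * μ.real univ) ^ (n + 2) * ∫ x, f x ∂(convPow μ (n + 1))) (Ico 0 T) := by
    refine continuousOn_tsum (u := fun n => C * (μ.real univ
      * (T * μ.real univ / (1 + T * μ.real univ)) ^ n)) (fun n => ?_) ?_ fun n τ hτ => ?_
    · refine ((continuousOn_pow n).div (by fun_prop) fun τ hτ => ?_).mul continuousOn_const
      exact pow_ne_zero _ (by nlinarith [mul_nonneg hτ.1 hM])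
    · have hP : 0 < 1 + T * μ.real univ := by nlinarith [mul_nonneg hT hM]
      refine ((summable_geometric_of_lt_one (by positivity) ?_).mul_left _).mul_left _
      rw [div_lt_one hP]
      exact lt_one_add _
    · have hw := constKernel_weight_nonneg hτ.1 hM n
      calc ‖τ ^ n / (1 + τ * μ.real univ) ^ (n + 2) * ∫ x, f x ∂(convPow μ (n + 1))‖
          ≤ τ ^ n / (1 + τ * μ.real univ) ^ (n + 2) * (C * μ.real univ ^ (n + 1)) := by
            rw [norm_mul, norm_of_nonneg hw]
            exact mul_le_mul_of_nonneg_left (ha n) hw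
        _ = C * (τ ^ n / (1 + τ * μ.real univ) ^ (n + 2) * μ.real univ ^ (n + 1)) := by ring
        _ ≤ _ := mul_le_mul_of_nonneg_left
            (constKernel_weight_mul_pow_le hτ.1 hτ.2.le hM n) hC
  refine continuousOn_of_locally_continuousOn fun t ht => ⟨Iio (t + 1), isOpen_Iio,
    lt_add_one t, ?_⟩
  rw [Ici_inter_Iio]
  refine (hseries (t + 1) (by linarith [mem_Ici.1 ht])).congr fun τ hτ => ?_
  exact integral_constKernelSolution hτ.1 hf fun n => .of_forall hfC

end constKernelSolution

section Iic

variable {α : Type*} [LinearOrder α] [MeasurableSpace α] {μ : Measure α} {a : α}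

theorem ae_lt_iff_measure_Iic_eq_zero : (∀ᵐ x ∂μ, a < x) ↔ μ (Iic a) = 0 := by
  simp only [ae_iff, not_lt]
  rfl

theorem measure_Ioi_eq_measure_univ (h : μ (Iic a) = 0) : μ (Ioi a) = μ univ :=
  measure_congr (ae_eq_univ.2 (by rwa [compl_Ioi]))

end Iic

theorem const_kernel_explicit_solution
    (ν₀ : Measure ℝ) [IsFiniteMeasure ν₀] (hν₀supp : ν₀ (Set.Iic 0) = 0)
    (φ₀ : ℝ → ℝ) (hφ₀ : ∀ s : ℝ, φ₀ s = ∫ x, (1 - Real.exp (-(s * x))) ∂ν₀) :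
    -- for each t ≥ 0, s ↦ ∂_s [φ₀(s)/(1 + t φ₀(s))] is completely monotone on (0,∞)
    (∀ t : ℝ, 0 ≤ t →
      CompletelyMonotoneOn (deriv (fun s => φ₀ s / (1 + t * φ₀ s)))) ∧
    -- hence there is a family of positive measures ν_t realizing this transform,
    ∃ ν : ℝ → Measure ℝ,
      (∀ t : ℝ, 0 ≤ t → (ν t) (Set.Iic 0) = 0 ∧
        ∀ s : ℝ, 0 < s →
          ∫ x, (1 - Real.exp (-(s * x))) ∂(ν t) = φ₀ s / (1 + t * φ₀ s)) ∧
      -- weakly continuous in t on [0,∞):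
      (∀ f : ℝ → ℝ, Continuous f → HasCompactSupport f → tsupport f ⊆ Set.Ioi 0 →
        ∀ t : ℝ, 0 ≤ t →
          Tendsto (fun τ => ∫ x, f x ∂(ν τ)) (𝓝[Set.Ici 0] t)
            (𝓝 (∫ x, f x ∂(ν t)))) ∧
      -- with decreasing total number of clusters ν_t((0,∞)) = m₀(0)/(1 + m₀(0) t)
      (∀ t : ℝ, 0 ≤ t →
        ((ν t) (Set.Ioi 0)).toReal =
          (ν₀ (Set.Ioi 0)).toReal / (1 + (ν₀ (Set.Ioi 0)).toReal * t)) := by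
  obtain rfl : φ₀ = fun s => ∫ x, (1 - exp (-(s * x))) ∂ν₀ := funext hφ₀
  have hpos : ∀ᵐ x ∂ν₀, 0 < x := ae_lt_iff_measure_Iic_eq_zero.2 hν₀supp
  have hnonneg : ∀ᵐ x ∂ν₀, 0 ≤ x := hpos.mono fun _ => le_of_lt
  have hsupp t : constKernelSolution ν₀ t (Iic 0) = 0 :=
    ae_lt_iff_measure_Iic_eq_zero.1 <| ae_constKernelSolution_of_add_closed measurableSet_Ioi
      (fun _ _ => add_pos) hpos
  have hnonneg_t t : ∀ᵐ x ∂(constKernelSolution ν₀ t), 0 ≤ x :=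
    ae_constKernelSolution_of_add_closed measurableSet_Ici (fun _ _ => add_nonneg) hnonneg
  refine ⟨fun t ht => ?_, constKernelSolution ν₀, fun t ht => ⟨hsupp t, fun s hs =>
    integral_one_sub_exp_neg_mul_constKernelSolution hnonneg ht hs.le⟩,
    fun f hf hfc _ t ht => ?_, fun t ht => ?_⟩
  · have := isFiniteMeasure_constKernelSolution (μ := ν₀) ht
    have hsol : EqOn (fun s => ∫ x, (1 - exp (-(s * x))) ∂(constKernelSolution ν₀ t))
        (fun s => (∫ x, (1 - exp (-(s * x))) ∂ν₀) / (1 + t * ∫ x, (1 - exp (-(s * x))) ∂ν₀))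
        (Ioi 0) := fun s hs =>
      integral_one_sub_exp_neg_mul_constKernelSolution hnonneg ht (le_of_lt hs)
    exact (completelyMonotoneOn_deriv_integral_one_sub_exp (hnonneg_t t)).congr
      (by simpa using hsol.iteratedDeriv_of_isOpen isOpen_Ioi 1)
  · obtain ⟨C, hC⟩ := hf.bounded_above_of_compact_support hfc
    exact continuousOn_integral_constKernelSolution hf.stronglyMeasurable hC t ht
  · rw [measure_Ioi_eq_measure_univ (hsupp t), measure_Ioi_eq_measure_univ hν₀supp,
      ← measureReal_def, ← measureReal_def,
      measureReal_univ_constKernelSolution ht, mul_comm]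
end
end

section
/- The coagulation functional need not be a measure for the additive kernel: Let ν be the positive measure on (0,∞) given by ν(dx) = x^{−3/2} 1_{(0,1)}(x) dx + δ₂(dx), where δ₂ is the Dirac mass at 2. Then ν has finite total mass ∫ x ν(dx) < ∞, yet there exists a continuous function f with compact support contained in [2,5] ⊂ (0,∞) such that the function (x,y) ↦ [f(x+y) − f(x) − f(y)](x+y) is not absolutely integrable with respect to the product measure ν ⊗ ν; in particular, for every small δ > 0, ∫₀^δ ∫₀^∞ [f(x+y)−f(x)−f(y)](x+y) ν(dx)ν(dy) = ∫₀^δ f(2+y)(2+y) y^{−3/2} dy, which diverges when f rises sufficiently steeply to the right of 2. Hence L(ν), defined by ⟨f, L(ν)⟩ = ½ ∫∫ [f(x+y)−f(x)−f(y)](x+y) ν(dx)ν(dy) on test functions, is not a Radon measure. -/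
/-!
The coagulation functional L(ν) need not be a measure for the additive kernel:
counterexample with ν(dx) = x^{−3/2} 1_{(0,1)}(x) dx + δ₂(dx)
(Menon–Pego, Section 2.2 and Figure 1).
-/

open MeasureTheory Filter Topology Set Real

noncomputable section

/-- The counterexample measure ν(dx) = x^{−3/2} 1_{(0,1)}(x) dx + δ₂(dx). -/
def counterexampleMeasure : Measure ℝ :=
  (volume.restrict (Set.Ioo (0:ℝ) 1)).withDensity
    (fun x => ENNReal.ofReal (x ^ (-(3:ℝ)/2))) + Measure.dirac 2

/-!
Take f(x) = √(min (x - 2) (5 - x)), which vanishes on (-∞, 2]. For 0 < y < 1 the only mass of ν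
on (0, ∞) that the integrand sees is the atom at 2: on (0, 1) all of x, y, x + y lie below 2.
Hence the inner integral is f(2 + y)(2 + y) = √y (2 + y), and against the density y^{-3/2} this
gives ∫₀^δ y^{-1} dy = ∞; by Tonelli the integrand is not ν ⊗ ν-integrable.
The first moment is finite because x · x^{-3/2} = x^{-1/2} is integrable at 0.
-/

theorem lintegral_Ioo_ofReal_rpow_eq_top {r δ : ℝ} (hδ : 0 < δ) (hr : r ≤ -1) :
    ∫⁻ y in Ioo 0 δ, ENNReal.ofReal (y ^ r) = ⊤ := by
  by_contra h
  have hint : IntegrableOn (fun y : ℝ => y ^ r) (Ioo 0 δ) :=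
    (lintegral_ofReal_ne_top_iff_integrable (by fun_prop)
      (ae_restrict_of_forall_mem measurableSet_Ioo fun y hy => rpow_nonneg hy.1.le r)).1 h
  rw [intervalIntegral.integrableOn_Ioo_rpow_iff hδ] at hint
  linarith

theorem lintegral_Ioo_ofReal_rpow_lt_top {r δ : ℝ} (hδ : 0 < δ) (hr : -1 < r) :
    ∫⁻ y in Ioo 0 δ, ENNReal.ofReal (y ^ r) < ⊤ :=
  ((intervalIntegral.integrableOn_Ioo_rpow_iff hδ).2 hr).lintegral_lt_top

theorem MeasureTheory.IntegrableOn.lintegral_lintegral_ofReal_lt_top {α β : Type*}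
    [MeasurableSpace α] [MeasurableSpace β] {μ : Measure α} {ν : Measure β} [SFinite μ]
    [SFinite ν] {F : α × β → ℝ} {s : Set α} {t : Set β}
    (hF : IntegrableOn F (s ×ˢ t) (μ.prod ν)) :
    ∫⁻ y in t, ∫⁻ x in s, ENNReal.ofReal (F (x, y)) ∂μ ∂ν < ⊤ := by
  have hfin := hF.hasFiniteIntegral
  rw [HasFiniteIntegral, setLIntegral_prod_symm _ hF.aestronglyMeasurable.enorm] at hfin
  exact (lintegral_mono fun y => lintegral_mono fun x => ofReal_le_enorm _).trans_lt hfin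

instance : SFinite counterexampleMeasure := by
  unfold counterexampleMeasure; infer_instance

theorem lintegral_counterexampleMeasure {g : ℝ → ENNReal} (hg : Measurable g) :
    ∫⁻ x, g x ∂counterexampleMeasure =
      (∫⁻ x in Ioo 0 1, ENNReal.ofReal (x ^ (-(3:ℝ)/2)) * g x) + g 2 := by
  rw [counterexampleMeasure, lintegral_add_measure, lintegral_dirac' _ hg,
    lintegral_withDensity_eq_lintegral_mul _ (by fun_prop) hg]
  rfl

theorem counterexampleMeasure_restrict_Ioi_zero :
    counterexampleMeasure.restrict (Ioi 0) = counterexampleMeasure := by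
  rw [counterexampleMeasure, Measure.restrict_add,
    restrict_withDensity measurableSet_Ioi, Measure.restrict_restrict measurableSet_Ioi,
    restrict_dirac, if_pos (by norm_num : (2:ℝ) ∈ Ioi 0),
    inter_eq_self_of_subset_right Ioo_subset_Ioi_self]

theorem setLIntegral_Ioo_counterexampleMeasure {δ : ℝ} (hδ : δ ≤ 1) {g : ℝ → ENNReal}
    (hg : Measurable g) :
    ∫⁻ y in Ioo 0 δ, g y ∂counterexampleMeasure =
      ∫⁻ y in Ioo 0 δ, ENNReal.ofReal (y ^ (-(3:ℝ)/2)) * g y := by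
  have h2 : (2:ℝ) ∉ Ioo 0 δ := fun h => by linarith [h.2]
  rw [counterexampleMeasure, Measure.restrict_add, restrict_dirac, if_neg h2, add_zero,
    restrict_withDensity measurableSet_Ioo, Measure.restrict_restrict measurableSet_Ioo,
    inter_eq_self_of_subset_left (Ioo_subset_Ioo_right hδ),
    lintegral_withDensity_eq_lintegral_mul _ (by fun_prop) hg]
  rfl

theorem lintegral_ofReal_counterexampleMeasure_lt_top :
    ∫⁻ x, ENNReal.ofReal x ∂counterexampleMeasure < ⊤ := by
  rw [lintegral_counterexampleMeasure (by fun_prop)]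
  have h_density : ∫⁻ x in Ioo 0 1, ENNReal.ofReal (x ^ (-(3:ℝ)/2)) * ENNReal.ofReal x =
      ∫⁻ x in Ioo 0 1, ENNReal.ofReal (x ^ (-(1:ℝ)/2)) := by
    refine setLIntegral_congr_fun measurableSet_Ioo fun x hx => ?_
    rw [← ENNReal.ofReal_mul (rpow_nonneg hx.1.le _), ← rpow_add_one hx.1.ne']
    norm_num
  rw [h_density]
  exact ENNReal.add_lt_top.2 ⟨lintegral_Ioo_ofReal_rpow_lt_top one_pos (by norm_num),
    ENNReal.ofReal_lt_top⟩

theorem lintegral_Ioi_coagulation_counterexampleMeasure {f : ℝ → ℝ} (hf : Measurable f)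
    (hf_zero : ∀ x ≤ 2, f x = 0) {y : ℝ} (hy : y ≤ 1) :
    ∫⁻ x in Ioi 0, ENNReal.ofReal ((f (x + y) - f x - f y) * (x + y)) ∂counterexampleMeasure =
      ENNReal.ofReal (f (2 + y) * (2 + y)) := by
  have h_vanish : ∀ x ∈ Ioo (0:ℝ) 1, ENNReal.ofReal (x ^ (-(3:ℝ)/2)) *
      ENNReal.ofReal ((f (x + y) - f x - f y) * (x + y)) = 0 := fun x hx => by
    rw [hf_zero (x + y) (by linarith [hx.2]), hf_zero x (by linarith [hx.2]),
      hf_zero y (by linarith)]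
    simp
  rw [counterexampleMeasure_restrict_Ioi_zero, lintegral_counterexampleMeasure (by fun_prop),
    setLIntegral_congr_fun measurableSet_Ioo h_vanish, lintegral_zero, zero_add,
    hf_zero 2 le_rfl, hf_zero y (by linarith), add_comm 2 y]
  simp

theorem setLIntegral_coagulation_counterexampleMeasure {f : ℝ → ℝ} (hf : Measurable f)
    (hf_zero : ∀ x ≤ 2, f x = 0) {δ : ℝ} (hδ : δ ≤ 1) :
    ∫⁻ y in Ioo 0 δ, ∫⁻ x in Ioi 0, ENNReal.ofReal ((f (x + y) - f x - f y) * (x + y))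
        ∂counterexampleMeasure ∂counterexampleMeasure =
      ∫⁻ y in Ioo 0 δ, ENNReal.ofReal (f (2 + y) * (2 + y) * y ^ (-(3:ℝ)/2)) := by
  rw [setLIntegral_congr_fun measurableSet_Ioo fun y hy =>
      lintegral_Ioi_coagulation_counterexampleMeasure hf hf_zero (hy.2.le.trans hδ),
    setLIntegral_Ioo_counterexampleMeasure hδ (by fun_prop)]
  refine setLIntegral_congr_fun measurableSet_Ioo fun y hy => ?_
  rw [← ENNReal.ofReal_mul (rpow_nonneg hy.1.le _), mul_comm]

def sqrtTent (x : ℝ) : ℝ := √(min (x - 2) (5 - x))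

theorem continuous_sqrtTent : Continuous sqrtTent := by
  unfold sqrtTent; fun_prop

theorem sqrtTent_nonneg (x : ℝ) : 0 ≤ sqrtTent x := sqrt_nonneg _

theorem sqrtTent_eq_zero_of_notMem {x : ℝ} (hx : x ∉ Icc 2 5) : sqrtTent x = 0 := by
  refine sqrt_eq_zero'.2 (min_le_iff.2 ?_)
  rw [mem_Icc, not_and_or, not_le, not_le] at hx
  rcases hx with hx | hx
  · exact Or.inl (by linarith)
  · exact Or.inr (by linarith)

theorem sqrtTent_eq_zero_of_le_two {x : ℝ} (hx : x ≤ 2) : sqrtTent x = 0 :=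
  sqrt_eq_zero'.2 (min_le_iff.2 (Or.inl (by linarith)))

theorem sqrtTent_two_add {y : ℝ} (hy : y ≤ 3 / 2) : sqrtTent (2 + y) = √y := by
  rw [sqrtTent, min_eq_left (by linarith), add_sub_cancel_left]

theorem lintegral_sqrtTent_mul_rpow_eq_top {δ : ℝ} (hδ : 0 < δ) (hδ' : δ ≤ 3 / 2) :
    ∫⁻ y in Ioo 0 δ, ENNReal.ofReal (sqrtTent (2 + y) * (2 + y) * y ^ (-(3:ℝ)/2)) = ⊤ := by
  refine top_unique ((lintegral_Ioo_ofReal_rpow_eq_top hδ le_rfl).symm.le.trans ?_)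
  refine setLIntegral_mono' measurableSet_Ioo fun y hy => ENNReal.ofReal_le_ofReal ?_
  have h_pow : √y * y ^ (-(3:ℝ)/2) = y ^ (-1:ℝ) := by
    rw [sqrt_eq_rpow, ← rpow_add hy.1]; norm_num
  calc y ^ (-1:ℝ) ≤ (2 + y) * y ^ (-1:ℝ) :=
        le_mul_of_one_le_left (rpow_nonneg hy.1.le _) (by linarith [hy.1])
    _ = sqrtTent (2 + y) * (2 + y) * y ^ (-(3:ℝ)/2) := by
        rw [sqrtTent_two_add (by linarith [hy.2]), ← h_pow]; ring

theorem additive_pairing_not_a_measure :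
    -- ν has finite mass ∫ x ν(dx) < ∞
    (∫⁻ x, ENNReal.ofReal x ∂counterexampleMeasure) < ⊤ ∧
    -- yet there is a continuous nonnegative f supported in [2,5] for which
    ∃ f : ℝ → ℝ, Continuous f ∧ (∀ x : ℝ, x ∉ Set.Icc (2:ℝ) 5 → f x = 0) ∧
      (∀ x : ℝ, 0 ≤ f x) ∧
      -- the region (0,δ) × (0,∞) contributes exactly
      -- ∫₀^δ f(2+y)(2+y) y^{−3/2} dy, which diverges:
      (∀ δ : ℝ, δ ∈ Set.Ioo (0:ℝ) 1 →
        (∫⁻ y in Set.Ioo (0:ℝ) δ,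
            (∫⁻ x in Set.Ioi (0:ℝ),
              ENNReal.ofReal ((f (x + y) - f x - f y) * (x + y))
                ∂counterexampleMeasure) ∂counterexampleMeasure) =
          ∫⁻ y in Set.Ioo (0:ℝ) δ,
            ENNReal.ofReal (f (2 + y) * (2 + y) * y ^ (-(3:ℝ)/2)) ∧
        (∫⁻ y in Set.Ioo (0:ℝ) δ,
            ENNReal.ofReal (f (2 + y) * (2 + y) * y ^ (-(3:ℝ)/2))) = ⊤) ∧
      -- hence (x,y) ↦ [f(x+y)−f(x)−f(y)](x+y) is not absolutely integrable with
      -- respect to ν ⊗ ν, and L(ν) is not a measure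
      ¬ IntegrableOn
          (fun p : ℝ × ℝ => (f (p.1 + p.2) - f p.1 - f p.2) * (p.1 + p.2))
          ((Set.Ioi (0:ℝ)) ×ˢ (Set.Ioi (0:ℝ)))
          (counterexampleMeasure.prod counterexampleMeasure) := by
  have hf_meas : Measurable sqrtTent := continuous_sqrtTent.measurable
  have hf_zero : ∀ x ≤ 2, sqrtTent x = 0 := fun _ => sqrtTent_eq_zero_of_le_two
  have h_region (δ : ℝ) (hδ : δ ∈ Ioo (0:ℝ) 1) :=
    setLIntegral_coagulation_counterexampleMeasure hf_meas hf_zero hδ.2.le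
  have h_diverges (δ : ℝ) (hδ : δ ∈ Ioo (0:ℝ) 1) :=
    lintegral_sqrtTent_mul_rpow_eq_top hδ.1 (by linarith [hδ.2])
  have h_half : (1 / 2 : ℝ) ∈ Ioo 0 1 := by norm_num
  refine ⟨lintegral_ofReal_counterexampleMeasure_lt_top, sqrtTent, continuous_sqrtTent,
    fun _ => sqrtTent_eq_zero_of_notMem, sqrtTent_nonneg,
    fun δ hδ => ⟨h_region δ hδ, h_diverges δ hδ⟩, fun h_int => ?_⟩
  have h_int_small :=
    h_int.mono_set (prod_mono subset_rfl (Ioo_subset_Ioi_self : Ioo (0:ℝ) (1 / 2) ⊆ Ioi 0))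
  exact h_int_small.lintegral_lintegral_ofReal_lt_top.ne
    ((h_region _ h_half).trans (h_diverges _ h_half))
end
end

section
/- Monotone density lemma for desingularized Laplace transforms: Let ψ : [0,∞) → ℝ be such that ∂_s ψ is the Laplace transform of a positive measure (i.e. ∂_s ψ is completely monotone). Let α < 1 and let L be slowly varying at 0. Then the following are equivalent: (1) ψ(s) − ψ(0) ~ s^{1−α} L(s) as s → 0⁺; (2) ∂_s ψ(s) ~ (1−α) s^{−α} L(s) as s → 0⁺. -/
/-!
Since `ψ'` is the Laplace transform of a positive measure, `ψ'` is nonnegative and nonincreasing,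
so `ψ` is nondecreasing and concave, and its increments are squeezed between derivative values:
`ψ'(b) (b - a) ≤ ψ b - ψ a ≤ ψ'(a) (b - a)`. Put `V s = s ^ (1 - α) * L s`, regularly varying
of index `β = 1 - α`.

(1) ⇒ (2): compare `ψ'(s)` with the slopes `(ψ (t s) - ψ s) / ((t - 1) s)`; by (1) these are
asymptotic to `(t ^ β - 1) / (t - 1) · V s / s`, and `(t ^ β - 1) / (t - 1) → β` as `t → 1`.

(2) ⇒ (1): split `ψ s - ψ 0` into increments over the geometric grid `λ ^ k s`. Finitely many
of them already give the lower bound. For the upper bound, `V (λ u) ≤ (1 + δ) λ ^ β V u` for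
small `u` dominates the whole series by a geometric one, with ratio `(1 + δ) λ ^ β < 1`.
-/

open MeasureTheory Filter Topology Set Real

lemma tendsto_const_mul_nhdsGT_zero {t : ℝ} (ht : 0 < t) :
    Tendsto (t * ·) (𝓝[>] (0 : ℝ)) (𝓝[>] 0) :=
  tendsto_iff_comap.2 (comap_mulLeft_nhdsGT_zero ht).ge

lemma tendsto_rpow_sub_one_div_sub_one (β : ℝ) :
    Tendsto (fun x : ℝ => (x ^ β - 1) / (x - 1)) (𝓝[≠] 1) (𝓝 β) := by
  have h := hasDerivAt_iff_tendsto_slope.mp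
    (hasDerivAt_rpow_const (x := 1) (p := β) (Or.inl one_ne_zero))
  rw [one_rpow, mul_one] at h
  exact h.congr fun x => by simp [slope_def_field]

lemma tendsto_div_rpow_sub_one_div_sub_one {β : ℝ} (hβ : β ≠ 0) :
    Tendsto (fun x : ℝ => β / ((x ^ β - 1) / (x - 1))) (𝓝[≠] 1) (𝓝 1) := by
  have := (tendsto_const_nhds (x := β)).div (tendsto_rpow_sub_one_div_sub_one β) hβ
  rwa [div_self hβ] at this

lemma tendsto_div_const_nhds_one_iff {ι : Type*} {l : Filter ι} {g : ι → ℝ} {c : ℝ}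
    (hc : c ≠ 0) : Tendsto (fun x => g x / c) l (𝓝 1) ↔ Tendsto g l (𝓝 c) := by
  refine ⟨fun h => ?_, fun h => by simpa [div_self hc] using h.div_const c⟩
  simpa [div_mul_cancel₀ _ hc] using h.mul_const c

lemma tendsto_pow_mul_nhdsWithin_Ici_zero {lam : ℝ} (hlam0 : 0 ≤ lam) (hlam1 : lam < 1)
    {s : ℝ} (hs : 0 ≤ s) : Tendsto (fun N : ℕ => lam ^ N * s) atTop (𝓝[≥] 0) :=
  tendsto_nhdsWithin_iff.2
    ⟨by simpa using (tendsto_pow_atTop_nhds_zero_of_lt_one hlam0 hlam1).mul_const s,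
      Eventually.of_forall fun N => mul_nonneg (pow_nonneg hlam0 N) hs⟩

lemma sum_geometric_mul_le {c q : ℝ} (hc : 0 ≤ c) (hq0 : 0 ≤ q) (hq1 : q < 1) (N : ℕ) :
    ∑ k ∈ Finset.range N, c * q ^ k ≤ c / (1 - q) := by
  rw [← Finset.mul_sum, div_eq_mul_inv]
  exact mul_le_mul_of_nonneg_left
    (sum_le_hasSum _ (fun i _ => pow_nonneg hq0 i) (hasSum_geometric_of_lt_one hq0 hq1)) hc

section DerivOnIoi

variable {f : ℝ → ℝ}

lemma deriv_mul_sub_le_sub_of_antitoneOn (hf : DifferentiableOn ℝ f (Ioi 0))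
    (hf' : AntitoneOn (deriv f) (Ioi 0)) {a b : ℝ} (ha : 0 < a) (hab : a ≤ b) :
    deriv f b * (b - a) ≤ f b - f a := by
  have hsub : Icc a b ⊆ Ioi 0 := fun x hx => ha.trans_le hx.1
  refine (convex_Icc a b).mul_sub_le_image_sub_of_le_deriv (hf.mono hsub).continuousOn
    (hf.mono (interior_subset.trans hsub)) (fun x hx => ?_) a (left_mem_Icc.2 hab) b
    (right_mem_Icc.2 hab) hab
  rw [interior_Icc] at hx
  exact hf' (hsub (Ioo_subset_Icc_self hx)) (hsub (right_mem_Icc.2 hab)) hx.2.le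

lemma sub_le_deriv_mul_sub_of_antitoneOn (hf : DifferentiableOn ℝ f (Ioi 0))
    (hf' : AntitoneOn (deriv f) (Ioi 0)) {a b : ℝ} (ha : 0 < a) (hab : a ≤ b) :
    f b - f a ≤ deriv f a * (b - a) := by
  have hsub : Icc a b ⊆ Ioi 0 := fun x hx => ha.trans_le hx.1
  refine (convex_Icc a b).image_sub_le_mul_sub_of_deriv_le (hf.mono hsub).continuousOn
    (hf.mono (interior_subset.trans hsub)) (fun x hx => ?_) a (left_mem_Icc.2 hab) b
    (right_mem_Icc.2 hab) hab
  rw [interior_Icc] at hx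
  exact hf' ha (hsub (Ioo_subset_Icc_self hx)) hx.1.le

lemma monotoneOn_Ici_of_deriv_nonneg (hf0 : ContinuousWithinAt f (Ici 0) 0)
    (hf : DifferentiableOn ℝ f (Ioi 0)) (hf' : ∀ s ∈ Ioi 0, 0 ≤ deriv f s) :
    MonotoneOn f (Ici 0) := by
  refine monotoneOn_of_deriv_nonneg (convex_Ici 0) (fun s hs => ?_) (by rwa [interior_Ici])
    (by rwa [interior_Ici])
  rcases (mem_Ici.1 hs).eq_or_lt with rfl | hs0
  · exact hf0
  · exact (hf.continuousOn.continuousAt (Ioi_mem_nhds hs0)).continuousWithinAt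

lemma pow_succ_mul_le_pow_mul {lam s : ℝ} (hlam0 : 0 ≤ lam) (hlam1 : lam ≤ 1) (hs : 0 ≤ s)
    (k : ℕ) : lam ^ (k + 1) * s ≤ lam ^ k * s :=
  mul_le_mul_of_nonneg_right (pow_le_pow_of_le_one hlam0 hlam1 k.le_succ) hs

lemma sum_mul_deriv_le_sub_of_antitoneOn (hf : DifferentiableOn ℝ f (Ioi 0))
    (hf' : AntitoneOn (deriv f) (Ioi 0)) {lam s : ℝ} (hlam0 : 0 < lam) (hlam1 : lam ≤ 1)
    (hs : 0 < s) (N : ℕ) :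
    ∑ k ∈ Finset.range N, (1 - lam) * (lam ^ k * s) * deriv f (lam ^ k * s) ≤
      f s - f (lam ^ N * s) := by
  calc _ ≤ ∑ k ∈ Finset.range N, (f (lam ^ k * s) - f (lam ^ (k + 1) * s)) := by
        refine Finset.sum_le_sum fun k _ => ?_
        have h := deriv_mul_sub_le_sub_of_antitoneOn hf hf' (by positivity)
          (pow_succ_mul_le_pow_mul hlam0.le hlam1 hs.le k)
        rwa [show lam ^ k * s - lam ^ (k + 1) * s = (1 - lam) * (lam ^ k * s) by ring,
          mul_comm] at h
    _ = f s - f (lam ^ N * s) := by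
        rw [Finset.sum_range_sub' (fun k => f (lam ^ k * s)), pow_zero, one_mul]

lemma sub_le_sum_mul_deriv_of_antitoneOn (hf : DifferentiableOn ℝ f (Ioi 0))
    (hf' : AntitoneOn (deriv f) (Ioi 0)) {lam s : ℝ} (hlam0 : 0 < lam) (hlam1 : lam ≤ 1)
    (hs : 0 < s) (N : ℕ) :
    f s - f (lam ^ N * s) ≤
      ∑ k ∈ Finset.range N, (1 - lam) * (lam ^ k * s) * deriv f (lam ^ (k + 1) * s) := by
  calc f s - f (lam ^ N * s)
        = ∑ k ∈ Finset.range N, (f (lam ^ k * s) - f (lam ^ (k + 1) * s)) := by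
        rw [Finset.sum_range_sub' (fun k => f (lam ^ k * s)), pow_zero, one_mul]
    _ ≤ _ := by
        refine Finset.sum_le_sum fun k _ => ?_
        have h := sub_le_deriv_mul_sub_of_antitoneOn hf hf' (by positivity)
          (pow_succ_mul_le_pow_mul hlam0.le hlam1 hs.le k)
        rwa [show lam ^ k * s - lam ^ (k + 1) * s = (1 - lam) * (lam ^ k * s) by ring,
          mul_comm (deriv f _)] at h

end DerivOnIoi

def RegularlyVaryingAtZero (V : ℝ → ℝ) (β : ℝ) : Prop :=
  ∀ t : ℝ, 0 < t → Tendsto (fun s => V (t * s) / V s) (𝓝[>] 0) (𝓝 (t ^ β))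

lemma regularlyVaryingAtZero_rpow_mul {L : ℝ → ℝ}
    (hL : ∀ t : ℝ, 0 < t → Tendsto (fun s => L (t * s) / L s) (𝓝[>] 0) (𝓝 1)) (β : ℝ) :
    RegularlyVaryingAtZero (fun s => s ^ β * L s) β := by
  intro t ht
  have := (hL t ht).const_mul (t ^ β)
  rw [mul_one] at this
  refine this.congr' ?_
  filter_upwards [self_mem_nhdsWithin] with s (hs : 0 < s)
  rw [mul_rpow ht.le hs.le, mul_div_mul_comm, mul_div_cancel_right₀ _ (rpow_pos_of_pos hs β).ne']

lemma pow_mul_mem_Ioo {lam s₀ s : ℝ} (hlam0 : 0 < lam) (hlam1 : lam ≤ 1) (hs : s ∈ Ioo 0 s₀)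
    (k : ℕ) : lam ^ k * s ∈ Ioo 0 s₀ :=
  ⟨mul_pos (pow_pos hlam0 k) hs.1,
    (mul_le_of_le_one_left hs.1.le (pow_le_one₀ hlam0.le hlam1)).trans_lt hs.2⟩

lemma le_pow_mul_of_forall_mem_Ioo {V : ℝ → ℝ} {lam r s₀ : ℝ} (hlam0 : 0 < lam)
    (hlam1 : lam ≤ 1) (hr : 0 ≤ r) (h : ∀ u ∈ Ioo 0 s₀, V (lam * u) ≤ r * V u) {s : ℝ}
    (hs : s ∈ Ioo 0 s₀) (k : ℕ) : V (lam ^ k * s) ≤ r ^ k * V s := by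
  induction k with
  | zero => simp
  | succ k ih =>
    calc V (lam ^ (k + 1) * s) = V (lam * (lam ^ k * s)) := by ring_nf
      _ ≤ r * V (lam ^ k * s) := h _ (pow_mul_mem_Ioo hlam0 hlam1 hs k)
      _ ≤ r * (r ^ k * V s) := mul_le_mul_of_nonneg_left ih hr
      _ = r ^ (k + 1) * V s := by ring

section MonotoneDensity

variable {f V : ℝ → ℝ} {β : ℝ}

lemma tendsto_sub_comp_const_mul_div (hV : ∀ s, 0 < s → 0 < V s)
    (hVβ : RegularlyVaryingAtZero V β)
    (h : Tendsto (fun s => (f s - f 0) / V s) (𝓝[>] 0) (𝓝 1)) {t : ℝ} (ht : 0 < t) :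
    Tendsto (fun s => (f (t * s) - f s) / V s) (𝓝[>] 0) (𝓝 (t ^ β - 1)) := by
  have := ((h.comp (tendsto_const_mul_nhdsGT_zero ht)).mul (hVβ t ht)).sub h
  rw [one_mul] at this
  refine this.congr' ?_
  filter_upwards [self_mem_nhdsWithin] with s (hs : 0 < s)
  have := hV (t * s) (mul_pos ht hs)
  have := hV s hs
  simp only [Function.comp_apply]
  field_simp
  ring

theorem tendsto_mul_deriv_div_of_tendsto_sub_div (hf : DifferentiableOn ℝ f (Ioi 0))
    (hf' : AntitoneOn (deriv f) (Ioi 0)) (hV : ∀ s, 0 < s → 0 < V s)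
    (hVβ : RegularlyVaryingAtZero V β)
    (h : Tendsto (fun s => (f s - f 0) / V s) (𝓝[>] 0) (𝓝 1)) :
    Tendsto (fun s => s * deriv f s / V s) (𝓝[>] 0) (𝓝 β) := by
  have hslope := tendsto_rpow_sub_one_div_sub_one β
  refine tendsto_order.2 ⟨fun b hb => ?_, fun b hb => ?_⟩
  · obtain ⟨t, hbt, ht1 : 1 < t⟩ := (((hslope.mono_left (nhdsGT_le_nhdsNE 1)).eventually
      (lt_mem_nhds hb)).and self_mem_nhdsWithin).exists
    have hlim :=
      (tendsto_sub_comp_const_mul_div hV hVβ h (zero_lt_one.trans ht1)).div_const (t - 1)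
    filter_upwards [hlim.eventually (lt_mem_nhds hbt), self_mem_nhdsWithin]
      with s hbs (hs : 0 < s)
    refine hbs.trans_le ?_
    have hmvt := sub_le_deriv_mul_sub_of_antitoneOn hf hf' hs (le_mul_of_one_le_left hs.le ht1.le)
    rw [div_right_comm]
    refine div_le_div_of_nonneg_right ?_ (hV s hs).le
    rw [div_le_iff₀ (sub_pos.2 ht1)]
    linarith [show deriv f s * (t * s - s) = s * deriv f s * (t - 1) by ring]
  · obtain ⟨t, hbt, ht0, ht1⟩ := (((hslope.mono_left (nhdsLT_le_nhdsNE 1)).eventually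
      (gt_mem_nhds hb)).and (Ioo_mem_nhdsLT zero_lt_one)).exists
    have hlim := (tendsto_sub_comp_const_mul_div hV hVβ h ht0).div_const (t - 1)
    filter_upwards [hlim.eventually (gt_mem_nhds hbt), self_mem_nhdsWithin]
      with s hbs (hs : 0 < s)
    refine lt_of_le_of_lt ?_ hbs
    have hmvt := deriv_mul_sub_le_sub_of_antitoneOn hf hf' (mul_pos ht0 hs)
      (mul_le_of_le_one_left hs.le ht1.le)
    rw [div_right_comm]
    refine div_le_div_of_nonneg_right ?_ (hV s hs).le
    rw [le_div_iff_of_neg (sub_neg.2 ht1)]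
    linarith [show deriv f s * (s - t * s) = -(s * deriv f s * (t - 1)) by ring]

lemma tendsto_mul_deriv_comp_const_mul_div (hV : ∀ s, 0 < s → 0 < V s)
    (hVβ : RegularlyVaryingAtZero V β)
    (h : Tendsto (fun s => s * deriv f s / V s) (𝓝[>] 0) (𝓝 β)) {c : ℝ} (hc : 0 < c) :
    Tendsto (fun s => c * s * deriv f (c * s) / V s) (𝓝[>] 0) (𝓝 (β * c ^ β)) := by
  refine ((h.comp (tendsto_const_mul_nhdsGT_zero hc)).mul (hVβ c hc)).congr' ?_
  filter_upwards [self_mem_nhdsWithin] with s (hs : 0 < s)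
  have := hV (c * s) (mul_pos hc hs)
  have := hV s hs
  simp only [Function.comp_apply]
  field_simp

lemma eventually_lt_sub_div_of_tendsto_mul_deriv_div (hβ : 0 < β)
    (hf : DifferentiableOn ℝ f (Ioi 0)) (hf' : AntitoneOn (deriv f) (Ioi 0))
    (hmono : MonotoneOn f (Ici 0)) (hV : ∀ s, 0 < s → 0 < V s)
    (hVβ : RegularlyVaryingAtZero V β)
    (h : Tendsto (fun s => s * deriv f s / V s) (𝓝[>] 0) (𝓝 β)) {b : ℝ} (hb : b < 1) :
    ∀ᶠ s in 𝓝[>] 0, b < (f s - f 0) / V s := by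
  obtain ⟨lam, hb_lam, hlam0, hlam1⟩ := ((((tendsto_div_rpow_sub_one_div_sub_one hβ.ne').mono_left
    (nhdsLT_le_nhdsNE 1)).eventually (lt_mem_nhds hb)).and (Ioo_mem_nhdsLT zero_lt_one)).exists
  have hq0 : 0 ≤ lam ^ β := (rpow_pos_of_pos hlam0 β).le
  have hq1 : lam ^ β < 1 := rpow_lt_one hlam0.le hlam1 hβ
  have hsum : HasSum (fun k : ℕ => β * (1 - lam) * (lam ^ β) ^ k)
      (β / ((lam ^ β - 1) / (lam - 1))) := by
    have := (hasSum_geometric_of_lt_one hq0 hq1).mul_left (β * (1 - lam))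
    rwa [show β * (1 - lam) * (1 - lam ^ β)⁻¹ = β / ((lam ^ β - 1) / (lam - 1)) by
      field_simp [sub_ne_zero.2 hlam1.ne, sub_ne_zero.2 hq1.ne, (sub_pos.2 hq1).ne']
      ring] at this
  obtain ⟨N, hN⟩ := (hsum.tendsto_sum_nat.eventually (lt_mem_nhds hb_lam)).exists
  have hterm (k : ℕ) : Tendsto (fun s => (1 - lam) * (lam ^ k * s) * deriv f (lam ^ k * s) / V s)
      (𝓝[>] 0) (𝓝 (β * (1 - lam) * (lam ^ β) ^ k)) := by
    convert (tendsto_mul_deriv_comp_const_mul_div hV hVβ h (pow_pos hlam0 k)).const_mul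
      (1 - lam) using 1
    · ext s
      ring
    · rw [rpow_pow_comm hlam0.le]
      congr 1
      ring
  filter_upwards [(tendsto_finsetSum _ fun k _ => hterm k).eventually (lt_mem_nhds hN),
    self_mem_nhdsWithin] with s hbs (hs : 0 < s)
  refine hbs.trans_le ?_
  rw [← Finset.sum_div]
  refine div_le_div_of_nonneg_right ?_ (hV s hs).le
  refine (sum_mul_deriv_le_sub_of_antitoneOn hf hf' hlam0 hlam1.le hs N).trans ?_
  have hN0 : 0 ≤ lam ^ N * s := by positivity
  linarith [hmono self_mem_Ici hN0 hN0]

lemma sub_le_mul_of_forall_mem_Ioo (hf : DifferentiableOn ℝ f (Ioi 0))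
    (hf' : AntitoneOn (deriv f) (Ioi 0)) (hf0 : ContinuousWithinAt f (Ici 0) 0)
    {lam q r s₀ s : ℝ} (hlam0 : 0 < lam) (hlam1 : lam < 1) (hq0 : 0 ≤ q) (hq1 : q < 1)
    (hr : 0 ≤ r) (hderiv : ∀ u ∈ Ioo 0 s₀, u * deriv f u ≤ r * V u)
    (hVlam : ∀ u ∈ Ioo 0 s₀, V (lam * u) ≤ q * V u) (hs : s ∈ Ioo 0 s₀) (hVs : 0 ≤ V s) :
    f s - f 0 ≤ r * (1 - lam) / lam * q / (1 - q) * V s := by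
  have hlam : 0 ≤ (1 - lam) / lam := div_nonneg (sub_nonneg.2 hlam1.le) hlam0.le
  set c := r * (1 - lam) / lam * q * V s
  have hc : 0 ≤ c := by
    simp only [c, mul_div_assoc]
    exact mul_nonneg (mul_nonneg (mul_nonneg hr hlam) hq0) hVs
  have hterm (k : ℕ) :
      (1 - lam) * (lam ^ k * s) * deriv f (lam ^ (k + 1) * s) ≤ c * q ^ k :=
    calc (1 - lam) * (lam ^ k * s) * deriv f (lam ^ (k + 1) * s)
        = (1 - lam) / lam * (lam ^ (k + 1) * s * deriv f (lam ^ (k + 1) * s)) := by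
          field_simp
          ring
      _ ≤ (1 - lam) / lam * (r * V (lam ^ (k + 1) * s)) :=
          mul_le_mul_of_nonneg_left (hderiv _ (pow_mul_mem_Ioo hlam0 hlam1.le hs _)) hlam
      _ ≤ (1 - lam) / lam * (r * (q ^ (k + 1) * V s)) :=
          mul_le_mul_of_nonneg_left (mul_le_mul_of_nonneg_left
            (le_pow_mul_of_forall_mem_Ioo hlam0 hlam1.le hq0 hVlam hs _) hr) hlam
      _ = c * q ^ k := by ring
  have hpartial (N : ℕ) : f s - f (lam ^ N * s) ≤ c / (1 - q) :=
    (sub_le_sum_mul_deriv_of_antitoneOn hf hf' hlam0 hlam1.le hs.1 N).trans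
      ((Finset.sum_le_sum fun k _ => hterm k).trans (sum_geometric_mul_le hc hq0 hq1 N))
  have hlim : Tendsto (fun N : ℕ => f s - f (lam ^ N * s)) atTop (𝓝 (f s - f 0)) :=
    tendsto_const_nhds.sub
      (hf0.tendsto.comp (tendsto_pow_mul_nhdsWithin_Ici_zero hlam0.le hlam1 hs.1.le))
  calc f s - f 0 ≤ c / (1 - q) := le_of_tendsto' hlim hpartial
    _ = _ := by ring

lemma eventually_sub_div_lt_of_tendsto_mul_deriv_div (hβ : 0 < β)
    (hf : DifferentiableOn ℝ f (Ioi 0)) (hf' : AntitoneOn (deriv f) (Ioi 0))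
    (hf0 : ContinuousWithinAt f (Ici 0) 0) (hV : ∀ s, 0 < s → 0 < V s)
    (hVβ : RegularlyVaryingAtZero V β)
    (h : Tendsto (fun s => s * deriv f s / V s) (𝓝[>] 0) (𝓝 β)) {b : ℝ} (hb : 1 < b) :
    ∀ᶠ s in 𝓝[>] 0, (f s - f 0) / V s < b := by
  have hG : Tendsto (fun lam : ℝ => lam ^ β / lam * (β / ((lam ^ β - 1) / (lam - 1))))
      (𝓝[<] 1) (𝓝 1) := by
    have hc : ContinuousAt (fun lam : ℝ => lam ^ β / lam) 1 :=
      (continuousAt_rpow_const 1 β (Or.inl one_ne_zero)).div continuousAt_id one_ne_zero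
    simpa using (hc.tendsto.mono_left nhdsWithin_le_nhds).mul
      ((tendsto_div_rpow_sub_one_div_sub_one hβ.ne').mono_left (nhdsLT_le_nhdsNE 1))
  obtain ⟨lam, hlam_b, hlam0, hlam1⟩ :=
    ((hG.eventually (gt_mem_nhds hb)).and (Ioo_mem_nhdsLT zero_lt_one)).exists
  have hq1 : lam ^ β < 1 := rpow_lt_one hlam0.le hlam1 hβ
  -- the constant of `sub_le_mul_of_forall_mem_Ioo` for `r = (1 + δ) β` and `q = (1 + δ) λ ^ β`
  have hH : ContinuousAt (fun δ : ℝ =>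
      (1 + δ) * β * (1 - lam) / lam * ((1 + δ) * lam ^ β) / (1 - (1 + δ) * lam ^ β)) 0 := by
    fun_prop (disch := first | exact hlam0.ne' | simpa using (sub_pos.2 hq1).ne')
  have hH0 : (1 + 0) * β * (1 - lam) / lam * ((1 + 0) * lam ^ β) / (1 - (1 + 0) * lam ^ β)
      = lam ^ β / lam * (β / ((lam ^ β - 1) / (lam - 1))) := by
    field_simp [sub_ne_zero.2 hlam1.ne, sub_ne_zero.2 hq1.ne, (sub_pos.2 hq1).ne', hlam0.ne']
    ring
  have hδ : ∀ᶠ δ in 𝓝[>] (0 : ℝ), (1 + δ) * β * (1 - lam) / lam * ((1 + δ) * lam ^ β) /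
      (1 - (1 + δ) * lam ^ β) < b ∧ (1 + δ) * lam ^ β < 1 := by
    have hq : ContinuousAt (fun δ : ℝ => (1 + δ) * lam ^ β) 0 := by fun_prop
    refine nhdsWithin_le_nhds
      ((hH.eventually (gt_mem_nhds ?_)).and (hq.eventually (gt_mem_nhds ?_)))
    · dsimp only
      rwa [hH0]
    · simpa using hq1
  obtain ⟨δ, ⟨hHδ, hqδ⟩, hδ0 : 0 < δ⟩ := (hδ.and self_mem_nhdsWithin).exists
  have hev : ∀ᶠ u in 𝓝[>] 0,
      u * deriv f u / V u < (1 + δ) * β ∧ V (lam * u) / V u < (1 + δ) * lam ^ β :=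
    (h.eventually (gt_mem_nhds (lt_mul_of_one_lt_left hβ (by linarith)))).and
      ((hVβ lam hlam0).eventually
        (gt_mem_nhds (lt_mul_of_one_lt_left (rpow_pos_of_pos hlam0 β) (by linarith))))
  obtain ⟨s₀, hs₀, hs₀ev⟩ := (nhdsGT_basis 0).eventually_iff.1 hev
  filter_upwards [Ioo_mem_nhdsGT hs₀] with s hs
  have hVs := hV s hs.1
  have hbound := sub_le_mul_of_forall_mem_Ioo hf hf' hf0 hlam0 hlam1 (by positivity) hqδ
    (by positivity) (fun u hu => ((div_lt_iff₀ (hV u hu.1)).1 (hs₀ev hu).1).le)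
    (fun u hu => ((div_lt_iff₀ (hV u hu.1)).1 (hs₀ev hu).2).le) hs hVs.le
  rw [div_lt_iff₀ hVs]
  exact hbound.trans_lt (mul_lt_mul_of_pos_right hHδ hVs)

theorem tendsto_sub_div_iff_tendsto_mul_deriv_div (hβ : 0 < β)
    (hf : DifferentiableOn ℝ f (Ioi 0)) (hf' : AntitoneOn (deriv f) (Ioi 0))
    (hmono : MonotoneOn f (Ici 0)) (hf0 : ContinuousWithinAt f (Ici 0) 0)
    (hV : ∀ s, 0 < s → 0 < V s) (hVβ : RegularlyVaryingAtZero V β) :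
    Tendsto (fun s => (f s - f 0) / V s) (𝓝[>] 0) (𝓝 1) ↔
      Tendsto (fun s => s * deriv f s / V s) (𝓝[>] 0) (𝓝 β) :=
  ⟨tendsto_mul_deriv_div_of_tendsto_sub_div hf hf' hV hVβ, fun h => tendsto_order.2
    ⟨fun _ hb => eventually_lt_sub_div_of_tendsto_mul_deriv_div hβ hf hf' hmono hV hVβ h hb,
      fun _ hb => eventually_sub_div_lt_of_tendsto_mul_deriv_div hβ hf hf' hf0 hV hVβ h hb⟩⟩

end MonotoneDensity

lemma antitoneOn_integral_exp_neg_mul {μ : Measure ℝ} (hμ : μ (Iio 0) = 0)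
    (hint : ∀ s, 0 < s → Integrable (fun x => exp (-(s * x))) μ) :
    AntitoneOn (fun s => ∫ x, exp (-(s * x)) ∂μ) (Ioi 0) := by
  intro a ha b hb hab
  have hnonneg : ∀ᵐ x ∂μ, 0 ≤ x := by
    rw [ae_iff]
    convert hμ using 2
    ext x
    simp
  exact integral_mono_ae (hint b hb) (hint a ha) (hnonneg.mono fun x hx =>
    exp_le_exp.2 (neg_le_neg (mul_le_mul_of_nonneg_right hab hx)))

theorem monotone_density_laplace_lemma
    -- ψ : [0,∞) → ℝ whose derivative is the Laplace transform of a
    -- positive measure μ on [0,∞)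
    (ψ : ℝ → ℝ)
    (μ : Measure ℝ) (hμsupp : μ (Set.Iio 0) = 0)
    (hψ0 : ContinuousWithinAt ψ (Set.Ici 0) 0)
    (hψd : ∀ s : ℝ, 0 < s →
      Integrable (fun x => Real.exp (-(s * x))) μ ∧
      HasDerivAt ψ (∫ x, Real.exp (-(s * x)) ∂μ) s)
    -- α < 1, and L slowly varying at 0
    (α : ℝ) (hα : α < 1)
    (L : ℝ → ℝ) (hLpos : ∀ s : ℝ, 0 < s → 0 < L s)
    (hLslow : ∀ t : ℝ, 0 < t →
      Tendsto (fun s => L (t * s) / L s) (𝓝[>] (0:ℝ)) (𝓝 1)) :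
    -- (1) ψ(s) − ψ(0) ~ s^{1−α} L(s)  ⟺  (2) ψ′(s) ~ (1−α) s^{−α} L(s), as s → 0⁺
    (Tendsto (fun s => (ψ s - ψ 0) / (s ^ (1 - α) * L s)) (𝓝[>] (0:ℝ)) (𝓝 1)) ↔
    (Tendsto (fun s => deriv ψ s / ((1 - α) * s ^ (-α) * L s)) (𝓝[>] (0:ℝ)) (𝓝 1)) := by
  have hβ : 0 < 1 - α := sub_pos.2 hα
  have hderiv : EqOn (deriv ψ) (fun s => ∫ x, exp (-(s * x)) ∂μ) (Ioi 0) :=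
    fun s hs => (hψd s hs).2.deriv
  have hdiff : DifferentiableOn ℝ ψ (Ioi 0) :=
    fun s hs => (hψd s hs).2.differentiableAt.differentiableWithinAt
  have hanti : AntitoneOn (deriv ψ) (Ioi 0) :=
    (antitoneOn_integral_exp_neg_mul hμsupp fun s hs => (hψd s hs).1).congr hderiv.symm
  have hmono : MonotoneOn ψ (Ici 0) := monotoneOn_Ici_of_deriv_nonneg hψ0 hdiff fun s hs => by
    rw [hderiv hs]
    exact integral_nonneg fun x => (exp_pos _).le
  have hV (s : ℝ) (hs : 0 < s) : 0 < s ^ (1 - α) * L s :=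
    mul_pos (rpow_pos_of_pos hs _) (hLpos s hs)
  rw [tendsto_sub_div_iff_tendsto_mul_deriv_div hβ hdiff hanti hmono hψ0 hV
    (regularlyVaryingAtZero_rpow_mul hLslow _), ← tendsto_div_const_nhds_one_iff hβ.ne']
  refine tendsto_congr' ?_
  filter_upwards [self_mem_nhdsWithin] with s (hs : 0 < s)
  have := hLpos s hs
  rw [show s ^ (1 - α) = s * s ^ (-α) by rw [sub_eq_add_neg, rpow_add hs, rpow_one]]
  field_simp
end

section
/- Inadmissibility of ρ > 1 for scaling profiles of the additive kernel: Let ρ > 1 and c > 0. Then there is no positive Radon measure ν on (0,∞) with ∫ x ν(dx) = 1 such that φ(ξ) = ∫ (1−e^{−ξx}) ν(dx) satisfies ξ = φ(ξ) + c φ(ξ)^{1+ρ} for all ξ > 0. Equivalently: if U(ξ) = φ(ξ)/ξ, then U is the Laplace transform of the tail distribution x ↦ ν((x,∞)), U(0⁺) = 1, U is completely monotone and nonconstant, but the relation forces U′(ξ) = −c ξ^{ρ−1} U^{1+ρ} / (1 + c(ρ+1) ξ^ρ U^ρ) → 0 as ξ → 0⁺, which is impossible for a nonconstant completely monotone function.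 -/
/-!
As `∫ x dν = 1`, the defect `ξ - φ(ξ) = ∫ (ξx - 1 + e^{-ξx}) dν(x)` is an integral of the
increasing function `t - 1 + e^{-t} ≥ t²/4` (for `t ≤ 1`), hence at least `K ξ²` for small `ξ`,
with `K = ¼ ∫ min(x, 1)² dν > 0`. On the other hand `0 ≤ φ(ξ) ≤ ξ`, so the profile equation
gives `ξ - φ(ξ) = c φ(ξ)^{1+ρ} ≤ c ξ^{1+ρ}`, which is `o(ξ²)` as `ξ → 0⁺` when `ρ > 1`.
-/

open MeasureTheory Filter Topology Set Real

lemma sq_div_four_le_sub_one_sub_exp_neg {t : ℝ} (ht₀ : 0 ≤ t) (ht₁ : t ≤ 1) :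
    t ^ 2 / 4 ≤ t - (1 - exp (-t)) := by
  -- third-order Taylor: `e^{-t} ≥ 1 - t + t²/2 - 2t³/9` on `[0, 1]`
  have h := Real.exp_bound (x := -t) (by rw [abs_neg, abs_of_nonneg ht₀]; exact ht₁) (n := 3)
    (by norm_num)
  simp only [Finset.sum_range_succ, Finset.sum_range_zero, abs_neg, abs_of_nonneg ht₀] at h
  norm_num [Nat.factorial] at h
  nlinarith [(abs_le.mp h).1, pow_le_pow_left₀ ht₀ ht₁ 3]

lemma monotoneOn_sub_one_sub_exp_neg : MonotoneOn (fun t => t - (1 - exp (-t))) (Ici 0) := by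
  intro s hs t _ hst
  have hsplit : exp (-t) = exp (-s) * exp (-(t - s)) := by rw [← exp_add]; ring_nf
  simp only
  nlinarith [one_sub_le_exp_neg (t - s), exp_pos (-s),
    exp_le_one_iff.mpr (neg_nonpos.mpr (mem_Ici.mp hs))]

lemma sq_mul_min_one_div_four_le {ξ x : ℝ} (hξ₀ : 0 ≤ ξ) (hξ₁ : ξ ≤ 1) (hx : 0 ≤ x) :
    (ξ * min x 1) ^ 2 / 4 ≤ ξ * x - (1 - exp (-(ξ * x))) := by
  have hmin₀ : 0 ≤ ξ * min x 1 := mul_nonneg hξ₀ (le_min hx zero_le_one)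
  calc (ξ * min x 1) ^ 2 / 4
      ≤ ξ * min x 1 - (1 - exp (-(ξ * min x 1))) :=
        sq_div_four_le_sub_one_sub_exp_neg hmin₀
          (mul_le_one₀ hξ₁ (le_min hx zero_le_one) (min_le_right x 1))
    _ ≤ ξ * x - (1 - exp (-(ξ * x))) :=
        monotoneOn_sub_one_sub_exp_neg hmin₀ (mem_Ici.mpr (mul_nonneg hξ₀ hx))
          (mul_le_mul_of_nonneg_left (min_le_left x 1) hξ₀)

lemma not_eventually_mul_sq_le_mul_rpow {K c ρ : ℝ} (hK : 0 < K) (hρ : 1 < ρ) :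
    ¬ ∀ᶠ ξ in 𝓝[>] (0 : ℝ), K * ξ ^ 2 ≤ c * ξ ^ (1 + ρ) := by
  intro h
  have hlim : Tendsto (fun ξ : ℝ => c * ξ ^ (ρ - 1)) (𝓝[>] 0) (𝓝 0) := by
    simpa [zero_rpow (sub_pos.2 hρ).ne'] using
      ((continuousAt_rpow_const 0 (ρ - 1) (Or.inr (sub_pos.2 hρ).le)).tendsto.const_mul
        c).mono_left (nhdsWithin_le_nhds (s := Ioi 0))
  obtain ⟨ξ, hle, hlt, hξ⟩ :=
    (h.and ((hlim.eventually (gt_mem_nhds hK)).and self_mem_nhdsWithin)).exists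
  rw [show 1 + ρ = 2 + (ρ - 1) by ring, rpow_add hξ, rpow_two] at hle
  nlinarith [pow_pos hξ 2]

section LaplaceTransform

variable {ν : Measure ℝ}

lemma integrable_one_sub_exp_neg_mul (hnonneg : ∀ᵐ x ∂ν, 0 ≤ x)
    (hint : Integrable (fun x => x) ν) {ξ : ℝ} (hξ : 0 ≤ ξ) :
    Integrable (fun x => 1 - exp (-(ξ * x))) ν := by
  refine (hint.const_mul ξ).mono (by fun_prop) (hnonneg.mono fun x hx => ?_)
  have hξx : 0 ≤ ξ * x := mul_nonneg hξ hx
  rw [norm_of_nonneg (sub_nonneg.mpr (exp_le_one_iff.mpr (neg_nonpos.mpr hξx))),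
    norm_of_nonneg hξx]
  linarith [one_sub_le_exp_neg (ξ * x)]

lemma integrable_min_one_sq (hnonneg : ∀ᵐ x ∂ν, 0 ≤ x) (hint : Integrable (fun x => x) ν) :
    Integrable (fun x => min x 1 ^ 2) ν := by
  refine hint.mono (by fun_prop) (hnonneg.mono fun x hx => ?_)
  have hmin₀ : 0 ≤ min x 1 := le_min hx zero_le_one
  rw [norm_of_nonneg (sq_nonneg _), norm_of_nonneg hx]
  nlinarith [min_le_left x 1, min_le_right x 1]

lemma integral_min_one_sq_pos (hpos : ∀ᵐ x ∂ν, 0 < x) (hint : Integrable (fun x => x) ν)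
    (hν : ν ≠ 0) : 0 < ∫ x, min x 1 ^ 2 ∂ν := by
  refine (integral_nonneg fun _ => sq_nonneg _).lt_of_ne fun h => hν ?_
  have hzero := (integral_eq_zero_iff_of_nonneg (fun x => sq_nonneg _)
    (integrable_min_one_sq (hpos.mono fun _ hx => hx.le) hint)).mp h.symm
  rw [← ae_eq_bot, ← eventually_false_iff_eq_bot]
  filter_upwards [hpos, hzero] with x hx hx0
  exact absurd hx0 (pow_ne_zero 2 (lt_min hx one_pos).ne')

lemma integral_one_sub_exp_neg_mul_nonneg (hnonneg : ∀ᵐ x ∂ν, 0 ≤ x) {ξ : ℝ} (hξ : 0 ≤ ξ) :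
    0 ≤ ∫ x, 1 - exp (-(ξ * x)) ∂ν :=
  integral_nonneg_of_ae <| hnonneg.mono fun _ hx =>
    sub_nonneg.mpr (exp_le_one_iff.mpr (neg_nonpos.mpr (mul_nonneg hξ hx)))

lemma integral_min_one_sq_mul_sq_le (hnonneg : ∀ᵐ x ∂ν, 0 ≤ x)
    (hint : Integrable (fun x => x) ν) {ξ : ℝ} (hξ₀ : 0 ≤ ξ) (hξ₁ : ξ ≤ 1) :
    (∫ x, min x 1 ^ 2 ∂ν) / 4 * ξ ^ 2 ≤
      ξ * (∫ x, x ∂ν) - ∫ x, 1 - exp (-(ξ * x)) ∂ν := by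
  rw [← integral_const_mul, ← integral_sub (hint.const_mul ξ)
    (integrable_one_sub_exp_neg_mul hnonneg hint hξ₀), ← integral_div, ← integral_mul_const]
  refine integral_mono_ae (((integrable_min_one_sq hnonneg hint).div_const _).mul_const _)
    ((hint.const_mul ξ).sub (integrable_one_sub_exp_neg_mul hnonneg hint hξ₀))
    (hnonneg.mono fun x hx => ?_)
  exact (sq_mul_min_one_div_four_le hξ₀ hξ₁ hx).trans_eq' (by ring)

end LaplaceTransform

theorem additive_profile_rho_gt_one_inadmissible
    (ρ : ℝ) (hρ : 1 < ρ) (c : ℝ) (hc : 0 < c) :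
    ¬ ∃ ν : Measure ℝ,
        -- ν a positive measure on (0,∞)
        ν (Set.Iic 0) = 0 ∧
        -- with total mass ∫ x ν(dx) = 1
        (∫⁻ x, ENNReal.ofReal x ∂ν) = 1 ∧
        -- whose desingularized Laplace transform φ(ξ) = ∫ (1−e^{−ξx}) ν(dx)
        -- satisfies the profile equation ξ = φ(ξ) + c φ(ξ)^{1+ρ} for all ξ > 0
        (∀ ξ : ℝ, 0 < ξ →
          ξ = (∫ x, (1 - Real.exp (-(ξ * x))) ∂ν) +
            c * (∫ x, (1 - Real.exp (-(ξ * x))) ∂ν) ^ (1 + ρ)) := by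
  rintro ⟨ν, hIic, hmass, hprofile⟩
  have hpos : ∀ᵐ x ∂ν, 0 < x := by
    rw [ae_iff]
    simp only [not_lt]
    exact hIic
  have hnonneg : ∀ᵐ x ∂ν, 0 ≤ x := hpos.mono fun _ hx => hx.le
  have hint : Integrable (fun x => x) ν :=
    ⟨by fun_prop, (hasFiniteIntegral_iff_ofReal hnonneg).mpr (by simp [hmass])⟩
  have hmean : ∫ x, x ∂ν = 1 := by
    simp [integral_eq_lintegral_of_nonneg_ae hnonneg (by fun_prop), hmass]
  have hν : ν ≠ 0 := by
    rintro rfl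
    simp at hmass
  set K := (∫ x, min x 1 ^ 2 ∂ν) / 4
  have hK : 0 < K := div_pos (integral_min_one_sq_pos hpos hint hν) four_pos
  refine not_eventually_mul_sq_le_mul_rpow (c := c) hK hρ ?_
  filter_upwards [Ioc_mem_nhdsGT one_pos] with ξ ⟨hξ₀, hξ₁⟩
  set φ := ∫ x, 1 - exp (-(ξ * x)) ∂ν
  have hlower : K * ξ ^ 2 ≤ ξ - φ := by
    simpa only [hmean, mul_one] using integral_min_one_sq_mul_sq_le hnonneg hint hξ₀.le hξ₁
  have hφ₀ : 0 ≤ φ := integral_one_sub_exp_neg_mul_nonneg hnonneg hξ₀.le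
  have hφξ : φ ≤ ξ := by nlinarith [sq_nonneg ξ]
  calc K * ξ ^ 2 ≤ ξ - φ := hlower
    _ = c * φ ^ (1 + ρ) := by linarith [hprofile ξ hξ₀]
    _ ≤ c * ξ ^ (1 + ρ) := by gcongr
end
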